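/- Conditional digital identity for the hedge component in the bond of maturity matching the numeraire: with (Ω, 𝓕, P), 𝓖 ⊆ 𝓕, Z a standard Gaussian random variable independent of 𝓖, v > 0, κ > 0, and X a strictly positive, integrable, 𝓖-measurable random variable, and X_T := X·exp(v·Z − v²/2), one has E[1_{{X_T > κ}} | 𝓖] = Φ⁰₋(κ, v, X) P-almost surely. -/

import Mathlib

open MeasureTheory Real

/-- The standard normal cumulative distribution function. -/
noncomputable def Phi (x : ℝ) : ℝ :=
  ∫ z in Set.Iic x, Real.exp (-z^2/2) / Real.sqrt (2 * Real.pi)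

lemma gaussPDF_eq (x : ℝ) :
    ProbabilityTheory.gaussianPDFReal 0 1 x = Real.exp (-x^2/2) / Real.sqrt (2 * Real.pi) := by
  simp [ProbabilityTheory.gaussianPDFReal, mul_comm, div_eq_mul_inv, neg_div, mul_inv_rev]

lemma gauss_Iic (x : ℝ) :
    ProbabilityTheory.gaussianReal 0 1 (Set.Iic x) = ENNReal.ofReal (Phi x) := by
  rw [ProbabilityTheory.gaussianReal_apply_eq_integral 0 one_ne_zero]
  congr 1
  exact setIntegral_congr_fun measurableSet_Iic fun z _ => gaussPDF_eq z

lemma gauss_Ioi (x : ℝ) :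
    ProbabilityTheory.gaussianReal 0 1 (Set.Ioi x) = ENNReal.ofReal (Phi (-x)) := by
  rw [ProbabilityTheory.gaussianReal_apply_eq_integral 0 one_ne_zero]
  congr 1
  rw [Phi]
  rw [show (∫ z in Set.Iic (-x), Real.exp (-z^2/2) / Real.sqrt (2 * Real.pi))
      = ∫ z in Set.Iic (-x), Real.exp (-(-z)^2/2) / Real.sqrt (2 * Real.pi) by
    refine setIntegral_congr_fun measurableSet_Iic fun z _ => ?_
    ring_nf]
  rw [integral_comp_neg_Iic (-x) (fun z => Real.exp (-z^2/2) / Real.sqrt (2 * Real.pi))]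
  rw [neg_neg]
  exact (setIntegral_congr_fun measurableSet_Ioi fun z _ => gaussPDF_eq z)

lemma Phi_nonneg (x : ℝ) : 0 ≤ Phi x :=
  setIntegral_nonneg measurableSet_Iic fun z _ => by positivity

lemma Phi_le_one (x : ℝ) : Phi x ≤ 1 := by
  have h := gauss_Iic x
  have h2 : ProbabilityTheory.gaussianReal 0 1 (Set.Iic x) ≤ 1 := prob_le_one
  rw [h] at h2
  have := ENNReal.ofReal_le_one.mp h2
  linarith [this]

lemma Phi_mono : Monotone Phi := by
  intro x y hxy
  have hx := gauss_Iic x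
  have hy := gauss_Iic y
  have : ProbabilityTheory.gaussianReal 0 1 (Set.Iic x)
      ≤ ProbabilityTheory.gaussianReal 0 1 (Set.Iic y) :=
    measure_mono (Set.Iic_subset_Iic.mpr hxy)
  rw [hx, hy, ENNReal.ofReal_le_ofReal_iff (Phi_nonneg y)] at this
  exact this

lemma Phi_measurable : Measurable Phi := Phi_mono.measurable

/-- Conditional digital identity for the hedge component in the bond of maturity matching
the numeraire: with `Z` standard Gaussian independent of `m`, `v, κ > 0`, `X > 0`
integrable and `m`-measurable, and `XT = X·exp(v·Z − v²/2)`, one has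
`E[1_{XT > κ} | m] = Φ(log(X/κ)/v − v/2)` a.s. -/
theorem conditional_digital_identity
    {Ω : Type*} {m : MeasurableSpace Ω} [MeasurableSpace Ω]
    (hm : m ≤ (inferInstance : MeasurableSpace Ω))
    (P : Measure Ω) [IsProbabilityMeasure P]
    (Z : Ω → ℝ) (hZmeas : Measurable Z)
    (hZlaw : P.map Z = ProbabilityTheory.gaussianReal 0 1)
    (hindep : ProbabilityTheory.Indep (MeasurableSpace.comap Z inferInstance) m P)
    {v κ : ℝ} (hv : 0 < v) (hκ : 0 < κ)
    (X : Ω → ℝ) (hXpos : ∀ ω, 0 < X ω) (hXint : Integrable X P)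
    (hXmeas : StronglyMeasurable[m] X)
    (XT : Ω → ℝ) (hXT : XT = fun ω => X ω * Real.exp (v * Z ω - v^2/2)) :
    P[fun ω => Set.indicator {ω' | κ < XT ω'} (fun _ => (1:ℝ)) ω|m]
      =ᵐ[P] fun ω => Phi (Real.log (X ω / κ) / v - v / 2) := by
  subst hXT
  set a : Ω → ℝ := fun ω => Real.log (X ω / κ) / v - v / 2 with ha
  have hXm : Measurable[m] X := hXmeas.measurable
  have ham : Measurable[m] a := by
    apply Measurable.sub ?_ measurable_const
    exact (Real.measurable_log.comp (hXm.div_const κ)).div_const v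
  have ha0 : Measurable a := ham.mono hm le_rfl
  set E : Set Ω := {ω' | κ < X ω' * Real.exp (v * Z ω' - v^2/2)} with hE
  have hEiff : ∀ ω, ω ∈ E ↔ -(a ω) < Z ω := by
    intro ω
    have hx := hXpos ω
    have h1 : ω ∈ E ↔ Real.log κ - Real.log (X ω) < v * Z ω - v^2/2 := by
      rw [hE, Set.mem_setOf_eq, ← Real.log_div (ne_of_gt hκ) (ne_of_gt hx),
        Real.log_lt_iff_lt_exp (by positivity), div_lt_iff₀ hx, mul_comm]
    have h2 : -(a ω) = (Real.log κ - Real.log (X ω)) / v + v / 2 := by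
      rw [ha]
      simp only
      rw [Real.log_div (ne_of_gt hx) (ne_of_gt hκ)]
      ring
    rw [h1, h2]
    constructor
    · intro h
      have h3 : Real.log κ - Real.log (X ω) < (Z ω - v / 2) * v := by nlinarith
      have h4 := (div_lt_iff₀ hv).mpr h3
      linarith
    · intro h
      have h3 : (Real.log κ - Real.log (X ω)) / v < Z ω - v / 2 := by linarith
      have h4 := (div_lt_iff₀ hv).mp h3
      nlinarith
  have hEset : E = (fun ω => Z ω + a ω) ⁻¹' Set.Ioi 0 := by
    ext ω
    rw [hEiff ω]
    simp only [Set.mem_preimage, Set.mem_Ioi]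
    constructor <;> intro h <;> linarith
  have hEmeas : MeasurableSet E := by
    rw [hEset]; exact (hZmeas.add ha0) measurableSet_Ioi
  set g : Ω → ℝ := fun ω => Phi (a ω) with hg
  have hgm : Measurable[m] g := Phi_measurable.comp ham
  have hgsm : StronglyMeasurable[m] g := hgm.stronglyMeasurable
  have hg0 : Measurable g := hgm.mono hm le_rfl
  have hgint : Integrable g P := by
    refine Integrable.mono' (integrable_const (1:ℝ)) hg0.aestronglyMeasurable ?_
    refine Filter.Eventually.of_forall fun ω => ?_
    rw [Real.norm_eq_abs, abs_le]
    exact ⟨by linarith [Phi_nonneg (a ω)], Phi_le_one (a ω)⟩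
  have hfint : Integrable (fun ω => Set.indicator E (fun _ => (1:ℝ)) ω) P := by
    exact (integrable_const (1:ℝ)).indicator hEmeas
  refine (ae_eq_condExp_of_forall_setIntegral_eq hm hfint
    (fun s _ _ => hgint.integrableOn) (fun s hs _ => ?_)
    hgsm.aestronglyMeasurable).symm
  -- main computation on an m-measurable set s
  set W : Ω → ℝ × ℝ := fun ω => (a ω, Set.indicator s (fun _ => (1:ℝ)) ω) with hW
  have hWm : Measurable[m] W := ham.prodMk (measurable_const.indicator hs)
  have hW0 : Measurable W := hWm.mono hm le_rfl
  have hindepZW : ProbabilityTheory.IndepFun Z W P := by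
    rw [ProbabilityTheory.indepFun_iff_measure_inter_preimage_eq_mul]
    intro t1 t2 ht1 ht2
    rw [ProbabilityTheory.Indep_iff] at hindep
    exact hindep _ _ ⟨t1, ht1, rfl⟩ (hWm ht2)
  have hmap : P.map (fun ω => (Z ω, W ω)) = (P.map Z).prod (P.map W) :=
    (ProbabilityTheory.indepFun_iff_map_prod_eq_prod_map_map hZmeas.aemeasurable
      hW0.aemeasurable).mp hindepZW
  set ν : Measure (ℝ × ℝ) := P.map W with hν
  haveI : IsProbabilityMeasure ν := Measure.isProbabilityMeasure_map hW0.aemeasurable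
  set B : Set (ℝ × (ℝ × ℝ)) :=
    ((fun p : ℝ × (ℝ × ℝ) => p.2.2) ⁻¹' {1}) ∩
      ((fun p : ℝ × (ℝ × ℝ) => p.1 + p.2.1) ⁻¹' Set.Ioi 0) with hB
  have hBmeas : MeasurableSet B := by
    refine MeasurableSet.inter ?_ ?_
    · exact (measurable_snd.comp measurable_snd) (measurableSet_singleton 1)
    · exact (measurable_fst.add (measurable_fst.comp measurable_snd)) measurableSet_Ioi
  have hpre : s ∩ E = (fun ω => (Z ω, W ω)) ⁻¹' B := by
    ext ω
    simp only [hB, Set.mem_inter_iff, Set.mem_preimage, Set.mem_singleton_iff, Set.mem_Ioi, hW]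
    rw [hEiff ω]
    by_cases hωs : ω ∈ s
    · simp only [hωs, true_and, Set.indicator_of_mem hωs]
      constructor <;> intro h <;> linarith
    · simp only [hωs, false_and, Set.indicator_of_notMem hωs, false_iff, not_and]
      intro h; exact absurd h.symm one_ne_zero
  -- compute LHS
  rw [setIntegral_indicator hEmeas, setIntegral_const, smul_eq_mul, mul_one]
  have hPsE : P (s ∩ E) = ∫⁻ ω in s, ENNReal.ofReal (g ω) ∂P := by
    rw [hpre, ← Measure.map_apply (hZmeas.prodMk hW0) hBmeas, hmap, hZlaw,
      Measure.prod_apply_symm hBmeas]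
    have hslice : ∀ q : ℝ × ℝ,
        ProbabilityTheory.gaussianReal 0 1 ((fun z => (z, q)) ⁻¹' B)
          = Set.indicator ((fun q : ℝ × ℝ => q.2) ⁻¹' {1})
              (fun q : ℝ × ℝ => ENNReal.ofReal (Phi q.1)) q := by
      intro q
      by_cases hq : q.2 = 1
      · have : (fun z => (z, q)) ⁻¹' B = Set.Ioi (-q.1) := by
          ext z
          simp [hB, hq]
          constructor <;> intro h <;> linarith
        rw [this, gauss_Ioi, neg_neg,
          Set.indicator_of_mem (show q ∈ (fun q : ℝ × ℝ => q.2) ⁻¹' {1} from hq)]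
      · have : (fun z => (z, q)) ⁻¹' B = ∅ := by
          ext z; simp [hB, hq]
        rw [this, measure_empty,
          Set.indicator_of_notMem (show q ∉ (fun q : ℝ × ℝ => q.2) ⁻¹' {1} from hq)]
    rw [lintegral_congr hslice]
    rw [hν, lintegral_map (by
      exact (ENNReal.measurable_ofReal.comp (Phi_measurable.comp measurable_fst)).indicator
        (measurable_snd (measurableSet_singleton 1))) hW0]
    have : (fun ω => Set.indicator ((fun q : ℝ × ℝ => q.2) ⁻¹' {1})
        (fun q : ℝ × ℝ => ENNReal.ofReal (Phi q.1)) (W ω))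
        = Set.indicator s (fun ω => ENNReal.ofReal (g ω)) := by
      funext ω
      by_cases hωs : ω ∈ s
      · rw [Set.indicator_of_mem hωs]
        refine Set.indicator_of_mem ?_ _
        simp [hW, hωs]
      · rw [Set.indicator_of_notMem hωs]
        refine Set.indicator_of_notMem ?_ _
        simp [hW, hωs]
    rw [this]
    exact lintegral_indicator (hm s hs) _
  have hRHS : ∫ ω in s, g ω ∂P = (∫⁻ ω in s, ENNReal.ofReal (g ω) ∂P).toReal := by
    rw [integral_eq_lintegral_of_nonneg_ae
      (Filter.Eventually.of_forall fun ω => Phi_nonneg (a ω))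
      hg0.aestronglyMeasurable.restrict]
  rw [hRHS, Measure.real, hPsE]
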